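/- arXiv:2502.07967 — 2 statements merged into one kernel-verified Lean document; each statement's English description precedes it below -/
import Mathlib

section
/- The Airy function A(x) = (1/2π) ∫_ℝ e^{ixξ} e^{iξ³} dξ satisfies A(0) = 1/(3 Γ(2/3)) and A'(0) = -1/(3 Γ(1/3)). -/
/-!
Split the integral at `0`; since `xξ + ξ³` is real and odd, the negative half is the complex
conjugate of the positive half. On the positive half-line, Cauchy's theorem moves the
contour to the ray `arg z = π/6`, on which `i z³ = -|z|³`. The arc connecting the two rays
contributes nothing in the limit, by Jordan's inequality. With `ω = e^{iπ/6}` the half-line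
integral becomes `ω ∫₀^∞ e^{iωxt - t³} dt`. This is differentiable in `x` under the integral sign,
and at `x = 0` the integral and its derivative are `Γ(1/3)/3` and `iω Γ(2/3)/3`. Taking real
parts and using `Γ(1/3) Γ(2/3) = 2π/√3` gives the two values.
-/

open Real Filter intervalIntegral
open Complex MeasureTheory Set Topology ComplexConjugate

/-- The common value of `∂_θ (e^{iθ} f(t e^{iθ}))` and `∂_t (i t e^{iθ} f(t e^{iθ}))`; their
equality is the Cauchy–Riemann equation in polar coordinates. -/
noncomputable def polarMixedDeriv (f : ℂ → ℂ) (θ t : ℝ) : ℂ :=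
  I * cexp (θ * I) * (f (t * cexp (θ * I)) + t * cexp (θ * I) * deriv f (t * cexp (θ * I)))

lemma continuous_polarMixedDeriv {f : ℂ → ℂ} (hf : Differentiable ℂ f) :
    Continuous (Function.uncurry (polarMixedDeriv f)) := by
  have := hf.continuous
  have := hf.deriv.continuous
  unfold polarMixedDeriv Function.uncurry
  fun_prop

lemma hasDerivAt_cexp_ofReal_mul_I (θ : ℝ) :
    HasDerivAt (fun θ : ℝ => cexp (θ * I)) (cexp (θ * I) * I) θ :=
  ((hasDerivAt_id θ).ofReal_comp.mul_const I).cexp.congr_deriv (by simp)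

lemma hasDerivAt_polar_angle {f : ℂ → ℂ} (hf : Differentiable ℂ f) (t θ : ℝ) :
    HasDerivAt (fun θ : ℝ => cexp (θ * I) * f (t * cexp (θ * I))) (polarMixedDeriv f θ t) θ := by
  have he := hasDerivAt_cexp_ofReal_mul_I θ
  have hfe := (hf (t * cexp (θ * I))).hasDerivAt.comp θ (he.const_mul (t : ℂ))
  refine (he.mul hfe).congr_deriv ?_
  simp only [polarMixedDeriv, Function.comp_apply]
  ring

lemma hasDerivAt_polar_radius {f : ℂ → ℂ} (hf : Differentiable ℂ f) (θ t : ℝ) :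
    HasDerivAt (fun t : ℝ => I * t * cexp (θ * I) * f (t * cexp (θ * I)))
      (polarMixedDeriv f θ t) t := by
  have ht := (hasDerivAt_id t).ofReal_comp
  have hfe := (hf (t * cexp (θ * I))).hasDerivAt.comp t (ht.mul_const (cexp (θ * I)))
  refine (((ht.const_mul I).mul_const (cexp (θ * I))).mul hfe).congr_deriv ?_
  simp only [polarMixedDeriv, Function.comp_apply, id, ofReal_one]
  ring

/-- Cauchy's theorem for the sector `{t e^{iθ} : 0 ≤ t ≤ R, 0 ≤ θ ≤ Θ}`. -/
theorem integral_rotated_ray_sub_integral_ray {f : ℂ → ℂ} (hf : Differentiable ℂ f) (R Θ : ℝ) :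
    (∫ t in 0..R, cexp (Θ * I) * f (t * cexp (Θ * I))) - ∫ t in 0..R, f t =
      ∫ θ in 0..Θ, I * R * cexp (θ * I) * f (R * cexp (θ * I)) := by
  have hcont := continuous_polarMixedDeriv hf
  have hangle (t : ℝ) : cexp (Θ * I) * f (t * cexp (Θ * I)) - f t =
      ∫ θ in 0..Θ, polarMixedDeriv f θ t := by
    rw [integral_eq_sub_of_hasDerivAt (fun θ _ => hasDerivAt_polar_angle hf t θ)
      ((hcont.comp (continuous_id.prodMk continuous_const)).intervalIntegrable 0 Θ)]
    simp
  have hradius (θ : ℝ) : ∫ t in 0..R, polarMixedDeriv f θ t =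
      I * R * cexp (θ * I) * f (R * cexp (θ * I)) := by
    rw [integral_eq_sub_of_hasDerivAt (fun t _ => hasDerivAt_polar_radius hf θ t)
      ((hcont.comp (continuous_const.prodMk continuous_id)).intervalIntegrable 0 R)]
    simp
  have hfubini : ∫ t in 0..R, ∫ θ in 0..Θ, polarMixedDeriv f θ t =
      ∫ θ in 0..Θ, ∫ t in 0..R, polarMixedDeriv f θ t :=
    intervalIntegral_intervalIntegral_swap <|
      ((hcont.comp continuous_swap).continuousOn.integrableOn_compact
        (isCompact_uIcc.prod isCompact_uIcc)).mono_set
        (prod_mono uIoc_subset_uIcc uIoc_subset_uIcc)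
  rw [← intervalIntegral.integral_sub, integral_congr (fun t _ => hangle t), hfubini]
  · exact integral_congr fun θ _ => hradius θ
  · exact ((continuous_const.mul (hf.continuous.comp (by fun_prop)))).intervalIntegrable 0 R
  · exact (hf.continuous.comp continuous_ofReal).intervalIntegrable 0 R

noncomputable def airyPhase (x : ℝ) (z : ℂ) : ℂ := cexp (I * (x * z + z ^ 3))

lemma differentiable_airyPhase (x : ℝ) : Differentiable ℂ (airyPhase x) := by
  unfold airyPhase; fun_prop

lemma norm_arc_airyPhase (x : ℝ) {R : ℝ} (hR : 0 ≤ R) (θ : ℝ) :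
    ‖I * R * cexp (θ * I) * airyPhase x (R * cexp (θ * I))‖ =
      R * rexp (-(x * R * Real.sin θ + R ^ 3 * Real.sin (3 * θ))) := by
  have hcube : cexp (θ * I) ^ 3 = cexp ((3 * θ : ℝ) * I) := by
    rw [← Complex.exp_nat_mul]; push_cast; ring_nf
  have hre : (I * (x * (R * cexp (θ * I)) + (R * cexp (θ * I)) ^ 3)).re =
      -(x * R * Real.sin θ + R ^ 3 * Real.sin (3 * θ)) := by
    rw [mul_pow, hcube, ← ofReal_pow]
    simp only [mul_re, mul_im, add_re, add_im, I_re, I_im, ofReal_re, ofReal_im,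
      exp_ofReal_mul_I_re, exp_ofReal_mul_I_im]
    ring
  simp only [airyPhase, norm_mul, Complex.norm_exp, hre, mul_I_re, ofReal_im, neg_zero,
    Real.exp_zero, norm_I, norm_real, Real.norm_of_nonneg hR, one_mul, mul_one]

/-- Jordan's inequality `sin s ≥ 2s/π` on `[0, π/2]`, applied to `sin 3θ`. -/
lemma arc_exponent_lower_bound (x : ℝ) {R θ : ℝ} (hR : 0 ≤ R) (hθ₀ : 0 ≤ θ) (hθ : θ ≤ π / 6) :
    R * (6 / π * R ^ 2 - |x|) * θ ≤ x * R * Real.sin θ + R ^ 3 * Real.sin (3 * θ) := by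
  have hsin_nonneg : 0 ≤ Real.sin θ := sin_nonneg_of_nonneg_of_le_pi hθ₀ (by linarith [pi_pos])
  have hlinear : -(|x| * R * θ) ≤ x * R * Real.sin θ := by
    have : |x * R * Real.sin θ| ≤ |x| * R * θ := by
      rw [abs_mul, abs_mul, abs_of_nonneg hR, abs_of_nonneg hsin_nonneg]
      exact mul_le_mul_of_nonneg_left (sin_le hθ₀) (by positivity)
    linarith [neg_abs_le (x * R * Real.sin θ)]
  have hjordan : R ^ 3 * (2 / π * (3 * θ)) ≤ R ^ 3 * Real.sin (3 * θ) :=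
    mul_le_mul_of_nonneg_left (mul_le_sin (by linarith) (by linarith)) (by positivity)
  have : R ^ 3 * (2 / π * (3 * θ)) = 6 / π * R ^ 3 * θ := by ring
  linarith

lemma integral_exp_neg_mul_le {c b : ℝ} (hc : 0 < c) (hb : 0 ≤ b) :
    ∫ θ in 0..b, rexp (-c * θ) ≤ 1 / c := by
  rw [integral_of_le hb]
  calc ∫ θ in Ioc 0 b, rexp (-c * θ)
      ≤ ∫ θ in Ioi 0, rexp (-c * θ) :=
        setIntegral_mono_set (exp_neg_integrableOn_Ioi 0 hc)
          (ae_of_all _ fun _ => (exp_pos _).le) Ioc_subset_Ioi_self.eventuallyLE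
    _ = 1 / c := by
        rw [integral_exp_mul_Ioi (by linarith) 0]
        field_simp
        simp

lemma norm_integral_arc_airyPhase_le (x : ℝ) {R : ℝ} (hR : 0 < R)
    (hR' : 0 < 6 / π * R ^ 2 - |x|) :
    ‖∫ θ in 0..π / 6, I * R * cexp (θ * I) * airyPhase x (R * cexp (θ * I))‖ ≤
      (6 / π * R ^ 2 - |x|)⁻¹ := by
  have hπ6 : 0 ≤ π / 6 := by positivity
  calc _ ≤ ∫ θ in 0..π / 6, R * rexp (-(R * (6 / π * R ^ 2 - |x|)) * θ) := by
        refine norm_integral_le_of_norm_le hπ6 (ae_of_all _ fun θ hθ => ?_)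
          (by apply Continuous.intervalIntegrable; fun_prop)
        rw [norm_arc_airyPhase x hR.le, neg_mul]
        gcongr
        exact arc_exponent_lower_bound x hR.le hθ.1.le hθ.2
    _ ≤ R * (1 / (R * (6 / π * R ^ 2 - |x|))) := by
        rw [intervalIntegral.integral_const_mul]
        gcongr
        exact integral_exp_neg_mul_le (by positivity) hπ6
    _ = (6 / π * R ^ 2 - |x|)⁻¹ := by
        field_simp

lemma tendsto_integral_arc_airyPhase (x : ℝ) :
    Tendsto (fun R : ℝ => ∫ θ in 0..π / 6, I * R * cexp (θ * I) * airyPhase x (R * cexp (θ * I)))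
      atTop (𝓝 0) := by
  have hden : Tendsto (fun R : ℝ => 6 / π * R ^ 2 - |x|) atTop atTop :=
    tendsto_atTop_add_const_right _ _
      ((tendsto_pow_atTop two_ne_zero).const_mul_atTop (by positivity))
  refine squeeze_zero_norm' ?_ (tendsto_inv_atTop_zero.comp hden)
  filter_upwards [eventually_gt_atTop 0, hden.eventually_gt_atTop 0] with R hR hR'
  exact norm_integral_arc_airyPhase_le x hR hR'

lemma integrableOn_pow_mul_exp_mul_sub_cube (n : ℕ) (a : ℝ) :
    IntegrableOn (fun t : ℝ => t ^ n * rexp (a * t - t ^ 3)) (Ioi 0) := by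
  refine integrable_of_isBigO_exp_neg one_pos (by fun_prop) ?_
  have hpow : (fun t : ℝ => t ^ n) =O[atTop] fun t => rexp (1 * t) :=
    (isLittleO_pow_exp_pos_mul_atTop n one_pos).isBigO
  have hexp : (fun t : ℝ => rexp (a * t - t ^ 3)) =O[atTop] fun t => rexp (-2 * t) := by
    refine Asymptotics.IsBigO.of_bound 1 ?_
    filter_upwards [eventually_ge_atTop (|a| + 2)] with t ht
    have ht0 : 0 ≤ t := by linarith [abs_nonneg a]
    have hsq : a + 2 ≤ t ^ 2 := by nlinarith [le_abs_self a, abs_nonneg a]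
    have : (a + 2) * t ≤ t ^ 3 := by nlinarith [mul_le_mul_of_nonneg_right hsq ht0]
    simp only [Real.norm_eq_abs, abs_exp, one_mul]
    exact exp_le_exp.mpr (by linarith)
  refine (hpow.mul hexp).congr_right fun t => ?_
  rw [← Real.exp_add]
  ring_nf

lemma integral_pow_mul_exp_neg_cube (n : ℕ) :
    ∫ t in Ioi (0 : ℝ), t ^ n * rexp (-t ^ 3) = Real.Gamma ((n + 1) / 3) / 3 := by
  have h := _root_.integral_rpow_mul_exp_neg_rpow (p := 3) (q := n) (by norm_num)
    (by linarith [n.cast_nonneg (α := ℝ)])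
  rw [one_div_mul_eq_div] at h
  rw [← h]
  refine setIntegral_congr_fun measurableSet_Ioi fun t _ => ?_
  simp only [Real.rpow_natCast, ← Real.rpow_natCast t 3, Nat.cast_ofNat]

noncomputable def cubicLaplace (c : ℂ) (x : ℝ) : ℂ :=
  ∫ t in Ioi (0 : ℝ), cexp (c * x * t) * rexp (-t ^ 3)

lemma norm_cexp_mul_mul_exp_neg_cube (c : ℂ) (x t : ℝ) :
    ‖cexp (c * x * t) * rexp (-t ^ 3)‖ = rexp (c.re * x * t - t ^ 3) := by
  rw [norm_mul, Complex.norm_exp, norm_real, Real.norm_of_nonneg (exp_pos _).le, ← Real.exp_add]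
  simp [sub_eq_add_neg]

lemma integrableOn_cubicLaplace_integrand (c : ℂ) (x : ℝ) :
    IntegrableOn (fun t : ℝ => cexp (c * x * t) * rexp (-t ^ 3)) (Ioi 0) := by
  have hdom := integrableOn_pow_mul_exp_mul_sub_cube 0 (c.re * x)
  simp only [pow_zero, one_mul] at hdom
  refine Integrable.mono' hdom (by fun_prop) (ae_of_all _ fun t => ?_)
  rw [norm_cexp_mul_mul_exp_neg_cube]

lemma hasDerivAt_cubicLaplace (c : ℂ) (x₀ : ℝ) :
    HasDerivAt (cubicLaplace c)
      (∫ t in Ioi (0 : ℝ), c * t * (cexp (c * x₀ * t) * rexp (-t ^ 3))) x₀ := by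
  set a := ‖c‖ * (|x₀| + 1)
  have hbound : ∀ x ∈ Metric.ball x₀ 1, ∀ t ∈ Ioi (0 : ℝ),
      ‖c * t * (cexp (c * x * t) * rexp (-t ^ 3))‖ ≤ ‖c‖ * (t ^ 1 * rexp (a * t - t ^ 3)) := by
    intro x hx t ht
    have hx' : |x| ≤ |x₀| + 1 := by
      have := abs_sub_abs_le_abs_sub x x₀
      rw [Metric.mem_ball, Real.dist_eq] at hx
      linarith
    have hre : c.re * x ≤ a :=
      (le_abs_self _).trans <| by
        rw [abs_mul]; exact mul_le_mul (abs_re_le_norm c) hx' (abs_nonneg x) (norm_nonneg c)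
    rw [norm_mul, norm_mul, norm_real, Real.norm_of_nonneg (le_of_lt ht),
      norm_cexp_mul_mul_exp_neg_cube, pow_one, mul_assoc]
    have ht0 : 0 ≤ t := le_of_lt ht
    gcongr
  refine (hasDerivAt_integral_of_dominated_loc_of_deriv_le (Metric.ball_mem_nhds x₀ one_pos)
    (Eventually.of_forall fun x => (integrableOn_cubicLaplace_integrand c x).aestronglyMeasurable)
    (integrableOn_cubicLaplace_integrand c x₀) (by fun_prop)
    ((ae_restrict_iff' measurableSet_Ioi).mpr (ae_of_all _ fun t ht x hx => hbound x hx t ht))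
    ((integrableOn_pow_mul_exp_mul_sub_cube 1 a).const_mul ‖c‖)
    (ae_of_all _ fun t x _ => ?_)).2
  exact ((((hasDerivAt_id x).ofReal_comp.const_mul c).mul_const (t : ℂ)).cexp.mul_const
    ((rexp (-t ^ 3) : ℝ) : ℂ)).congr_deriv (by simp only [ofReal_one, id]; ring)

lemma cubicLaplace_zero (c : ℂ) : cubicLaplace c 0 = (Real.Gamma (1 / 3) / 3 : ℝ) := by
  have h := integral_pow_mul_exp_neg_cube 0
  simp only [pow_zero, one_mul, Nat.cast_zero, zero_add] at h
  simp only [cubicLaplace, ofReal_zero, mul_zero, zero_mul, Complex.exp_zero, one_mul, ← h]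
  exact integral_complex_ofReal

lemma hasDerivAt_cubicLaplace_zero (c : ℂ) :
    HasDerivAt (cubicLaplace c) (c * (Real.Gamma (2 / 3) / 3 : ℝ)) 0 := by
  have h := integral_pow_mul_exp_neg_cube 1
  norm_num at h
  convert hasDerivAt_cubicLaplace c 0 using 1
  simp only [ofReal_zero, mul_zero, zero_mul, Complex.exp_zero, one_mul]
  rw [← h, ← integral_complex_ofReal, ← MeasureTheory.integral_const_mul]
  congr 1 with t
  push_cast
  ring

lemma intervalIntegral_conj (f : ℝ → ℂ) (a b : ℝ) :
    ∫ t in a..b, conj (f t) = conj (∫ t in a..b, f t) := by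
  simp only [intervalIntegral, integral_conj, map_sub]

lemma integral_neg_self_eq_add_conj {f : ℝ → ℂ} (hf : Continuous f)
    (hconj : ∀ t, f (-t) = conj (f t)) (R : ℝ) :
    ∫ t in -R..R, f t = (∫ t in 0..R, f t) + conj (∫ t in 0..R, f t) := by
  have hneg : ∫ t in -R..0, f t = conj (∫ t in 0..R, f t) := by
    rw [← intervalIntegral_conj, ← neg_zero, ← integral_comp_neg, neg_zero]
    exact integral_congr fun t _ => hconj t
  rw [← integral_add_adjacent_intervals (hf.intervalIntegrable _ 0) (hf.intervalIntegrable 0 _),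
    hneg, add_comm]

lemma airyPhase_neg (x t : ℝ) : airyPhase x (-t : ℝ) = conj (airyPhase x t) := by
  simp only [airyPhase, ← Complex.exp_conj, map_mul, map_add, map_pow, conj_I, conj_ofReal]
  push_cast
  ring_nf

noncomputable def airyRay : ℂ := cexp (↑(π / 6) * I)

noncomputable def airyHalf (x : ℝ) : ℂ := airyRay * cubicLaplace (I * airyRay) x

lemma airyRay_pow_three : airyRay ^ 3 = I := by
  rw [airyRay, ← Complex.exp_nat_mul, show ((3 : ℕ) : ℂ) * (↑(π / 6) * I) = ↑(π / 2) * I by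
    push_cast; ring, exp_mul_I, ← ofReal_cos, ← ofReal_sin, Real.cos_pi_div_two, Real.sin_pi_div_two]
  simp

lemma airyRay_mul_airyPhase (x t : ℝ) :
    airyRay * airyPhase x (t * airyRay) = airyRay * (cexp (I * airyRay * x * t) * rexp (-t ^ 3)) := by
  rw [airyPhase, ofReal_exp, ← Complex.exp_add, mul_pow, airyRay_pow_three]
  push_cast
  ring_nf
  rw [I_sq]
  ring_nf

/-- Rotating the half-line `[0, ∞)` to the ray `arg z = π/6`, where `i z³ = -|z|³`. -/
lemma tendsto_halfLine_integral_airyPhase (x : ℝ) :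
    Tendsto (fun R : ℝ => ∫ t in 0..R, airyPhase x t) atTop
      (𝓝 (airyHalf x)) := by
  have hray : Tendsto (fun R : ℝ => ∫ t in 0..R, airyRay * airyPhase x (t * airyRay)) atTop
      (𝓝 (airyHalf x)) := by
    simp only [airyRay_mul_airyPhase, intervalIntegral.integral_const_mul, airyHalf, cubicLaplace]
    exact (intervalIntegral_tendsto_integral_Ioi 0
      (integrableOn_cubicLaplace_integrand _ x) tendsto_id).const_mul airyRay
  have hsector (R : ℝ) : ∫ t in 0..R, airyPhase x t =
      (∫ t in 0..R, airyRay * airyPhase x (t * airyRay)) -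
        ∫ θ in 0..π / 6, I * R * cexp (θ * I) * airyPhase x (R * cexp (θ * I)) := by
    rw [← integral_rotated_ray_sub_integral_ray (differentiable_airyPhase x), airyRay]
    ring
  simpa only [hsector, sub_zero] using hray.sub (tendsto_integral_arc_airyPhase x)

lemma tendsto_symmetric_integral_airyPhase (x : ℝ) :
    Tendsto (fun R : ℝ => ∫ ξ in -R..R, airyPhase x ξ) atTop
      (𝓝 (airyHalf x + conj (airyHalf x))) := by
  have h := tendsto_halfLine_integral_airyPhase x
  refine (h.add ((continuous_conj.tendsto _).comp h)).congr fun R => ?_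
  exact (integral_neg_self_eq_add_conj (f := fun t : ℝ => airyPhase x t)
    ((differentiable_airyPhase x).continuous.comp continuous_ofReal) (airyPhase_neg x) R).symm

lemma airyHalf_zero : airyHalf 0 = airyRay * (Real.Gamma (1 / 3) / 3 : ℝ) := by
  rw [airyHalf, cubicLaplace_zero]

lemma hasDerivAt_airyHalf_zero :
    HasDerivAt airyHalf (airyRay * (I * airyRay) * (Real.Gamma (2 / 3) / 3 : ℝ)) 0 :=
  ((hasDerivAt_cubicLaplace_zero (I * airyRay)).const_mul airyRay).congr_deriv
    (mul_assoc _ _ _).symm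

lemma re_airyRay : airyRay.re = √3 / 2 := by
  rw [airyRay, exp_ofReal_mul_I_re, cos_pi_div_six]

lemma re_airyRay_mul_I_mul_airyRay : (airyRay * (I * airyRay)).re = -(√3 / 2) := by
  rw [mul_left_comm, ← sq, airyRay, ← Complex.exp_nat_mul,
    show ((2 : ℕ) : ℂ) * (↑(π / 6) * I) = ↑(π / 3) * I by push_cast; ring,
    I_mul_re, exp_ofReal_mul_I_im, sin_pi_div_three]

lemma add_conj_mul_ofReal (z : ℂ) (r : ℝ) : z * r + conj (z * r) = ((2 * z.re * r : ℝ) : ℂ) := by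
  rw [add_conj, re_mul_ofReal, mul_assoc]

lemma sqrt_three_mul_Gamma_one_third_mul_Gamma_two_thirds :
    √3 * Real.Gamma (1 / 3) * Real.Gamma (2 / 3) = 2 * π := by
  have h := Real.Gamma_mul_Gamma_one_sub (1 / 3)
  rw [show (1 : ℝ) - 1 / 3 = 2 / 3 by norm_num, show π * (1 / 3) = π / 3 by ring,
    sin_pi_div_three] at h
  rw [mul_assoc, h]
  field_simp

/-- The Airy function `A(x) = (1/2π) ∫ e^{ixξ + iξ³} dξ` (as a conditionally convergent
oscillatory integral, i.e. the limit of the truncated integrals) satisfies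
`A(0) = 1/(3Γ(2/3))` and `A'(0) = -1/(3Γ(1/3))`. -/
theorem airy_values_at_zero (A : ℝ → ℂ)
    (hA : ∀ x : ℝ, Tendsto
      (fun R : ℝ => (1 / (2 * π) : ℂ) *
        ∫ ξ in (-R)..R, Complex.exp (Complex.I * (x * ξ + ξ ^ 3)))
      atTop (nhds (A x))) :
    A 0 = 1 / (3 * (Real.Gamma (2 / 3) : ℂ)) ∧
      deriv A 0 = -(1 / (3 * (Real.Gamma (1 / 3) : ℂ))) := by
  have hA_eq (x : ℝ) : A x = (1 / (2 * π) : ℂ) * (airyHalf x + conj (airyHalf x)) :=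
    tendsto_nhds_unique (hA x) ((tendsto_symmetric_integral_airyPhase x).const_mul _)
  have hA' : HasDerivAt A ((1 / (2 * π) : ℂ) *
      (airyRay * (I * airyRay) * (Real.Gamma (2 / 3) / 3 : ℝ) +
        conj (airyRay * (I * airyRay) * (Real.Gamma (2 / 3) / 3 : ℝ)))) 0 := by
    rw [funext hA_eq]
    exact (hasDerivAt_airyHalf_zero.add hasDerivAt_airyHalf_zero.star).const_mul _
  have hΓ := sqrt_three_mul_Gamma_one_third_mul_Gamma_two_thirds
  constructor
  · rw [hA_eq, airyHalf_zero, add_conj_mul_ofReal, re_airyRay]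
    have : 1 / (2 * π) * (2 * (√3 / 2) * (Real.Gamma (1 / 3) / 3)) =
        1 / (3 * Real.Gamma (2 / 3)) := by
      field_simp
      linear_combination hΓ
    exact_mod_cast this
  · rw [hA'.deriv, add_conj_mul_ofReal, re_airyRay_mul_I_mul_airyRay]
    have : 1 / (2 * π) * (2 * -(√3 / 2) * (Real.Gamma (2 / 3) / 3)) =
        -(1 / (3 * Real.Gamma (1 / 3))) := by
      field_simp
      linear_combination -hΓ
    exact_mod_cast this
end

section
/- Let g be a smooth function with compact support contained in (0, ∞), and define u(x,t) = 3∫₀^t A(x/(t−t')^{1/3}) · (I_{−2/3} g)(t') / (t−t')^{1/3} dt', where A is the Airy function and I_{−2/3} the Riemann-Liouville operator of order −2/3. Then u(0, t) = g(t) for all t. -/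
open MeasureTheory intervalIntegral Real

/-- The Riemann-Liouville fractional integral of order `a > 0` of a complex-valued
function. -/
noncomputable def RL (a : ℝ) (g : ℝ → ℂ) (t : ℝ) : ℂ :=
  (Real.Gamma a : ℂ)⁻¹ * ∫ s in (0 : ℝ)..t, ((t - s) ^ (a - 1) : ℝ) • g s

/-- The Riemann-Liouville operator of order `-2/3`, via `I_{-2/3} = (d/dt) ∘ I_{1/3}`. -/
noncomputable def RLnegTwoThirds (g : ℝ → ℂ) : ℝ → ℂ := deriv (RL (1 / 3) g)

open scoped Convolution
open Set Filter ContinuousLinearMap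

/-- The kernel `u ↦ u₊^(a-1)/Γ(a)`. -/
noncomputable def kk (a : ℝ) (u : ℝ) : ℝ := if 0 < u then u ^ (a - 1) / Real.Gamma a else 0

lemma kk_of_nonpos {a u : ℝ} (hu : u ≤ 0) : kk a u = 0 := if_neg (not_lt.mpr hu)

lemma kk_nonneg {a : ℝ} (ha : 0 < a) (u : ℝ) : 0 ≤ kk a u := by
  unfold kk
  split_ifs with h
  · exact div_nonneg (Real.rpow_nonneg h.le _) (Real.Gamma_pos_of_pos ha).le
  · exact le_rfl

lemma kk_one_of_pos {u : ℝ} (hu : 0 < u) : kk 1 u = 1 := by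
  rw [kk, if_pos hu]
  simp [Real.Gamma_one]

lemma kk_one_le_one (u : ℝ) : kk 1 u ≤ 1 := by
  rcases le_or_gt u 0 with hu | hu
  · rw [kk_of_nonpos hu]; norm_num
  · rw [kk_one_of_pos hu]

lemma kk_eq_indicator (a : ℝ) :
    kk a = Set.indicator (Set.Ioi 0) (fun u => u ^ (a - 1) / Real.Gamma a) := by
  funext u
  simp [kk, Set.indicator_apply, Set.mem_Ioi]

lemma measurable_kk (a : ℝ) : Measurable (kk a) := by
  rw [kk_eq_indicator]
  have hm : Measurable fun u : ℝ => u ^ (a - 1) := by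
    refine measurable_of_continuousOn_compl_singleton (0 : ℝ) ?_
    exact fun x hx => (Real.continuousAt_rpow_const x _
      (Or.inl (by simpa using hx))).continuousWithinAt
  exact (hm.div_const _).indicator measurableSet_Ioi

lemma locallyIntegrable_kk {a : ℝ} (ha : 0 < a) : LocallyIntegrable (kk a) volume := by
  rw [MeasureTheory.locallyIntegrable_iff]
  intro K hK
  obtain ⟨r, hr⟩ := hK.isBounded.subset_closedBall 0
  have h1 : IntegrableOn (fun u : ℝ => u ^ (a - 1) / Real.Gamma a) (Set.Ioc 0 (max r 1)) := by
    exact ((intervalIntegral.intervalIntegrable_rpow' (by linarith)).div_const _).1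
  have h2 : IntegrableOn (kk a) (Metric.closedBall 0 r) := by
    rw [kk_eq_indicator, IntegrableOn, integrable_indicator_iff measurableSet_Ioi,
      IntegrableOn, Measure.restrict_restrict measurableSet_Ioi]
    refine h1.mono_set ?_
    rintro x ⟨hx1, hx2⟩
    rw [Real.closedBall_eq_Icc] at hx2
    have : x ≤ r := by linarith [hx2.2]
    exact ⟨hx1, this.trans (le_max_left r 1)⟩
  exact h2.mono_set hr

lemma conv_kk_eq (a : ℝ) (h : ℝ → ℂ) (h0 : ∀ s ≤ (0:ℝ), h s = 0) (t : ℝ) :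
    (kk a ⋆[ContinuousLinearMap.lsmul ℝ ℝ, volume] h) t
      = (Real.Gamma a : ℂ)⁻¹ * ∫ s in (0:ℝ)..t, ((t - s) ^ (a - 1) : ℝ) • h s := by
  rw [convolution_eq_swap]
  have key : (fun s => (ContinuousLinearMap.lsmul ℝ ℝ) (kk a (t - s)) (h s))
      = Set.indicator (Set.Ioo 0 t) (fun s => kk a (t - s) • h s) := by
    funext s
    simp only [ContinuousLinearMap.lsmul_apply]
    by_cases h1 : s ∈ Set.Ioo 0 t
    · rw [Set.indicator_of_mem h1]
    · rw [Set.indicator_of_notMem h1]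
      rcases le_or_gt s 0 with hs | hs
      · rw [h0 s hs, smul_zero]
      · have hts : t ≤ s := by
          by_contra hc
          exact h1 ⟨hs, not_le.mp hc⟩
        rw [kk_of_nonpos (by linarith), zero_smul]
  rw [key, MeasureTheory.integral_indicator measurableSet_Ioo]
  rcases le_or_gt t 0 with ht | ht
  · have hz : ∫ s in (0:ℝ)..t, (((t - s) ^ (a - 1) : ℝ)) • h s = 0 := by
      rw [intervalIntegral.integral_of_ge ht, neg_eq_zero]
      calc ∫ s in Set.Ioc t 0, (((t - s) ^ (a - 1) : ℝ)) • h s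
          = ∫ _ in Set.Ioc t 0, (0:ℂ) :=
            setIntegral_congr_fun measurableSet_Ioc (fun s hs => by rw [h0 s hs.2, smul_zero])
        _ = 0 := by simp
    rw [hz, mul_zero, Set.Ioo_eq_empty (not_lt.mpr ht)]
    simp
  · rw [intervalIntegral.integral_of_le ht.le, MeasureTheory.integral_Ioc_eq_integral_Ioo,
      ← MeasureTheory.integral_const_mul]
    refine setIntegral_congr_fun measurableSet_Ioo (fun s hs => ?_)
    have hpos : 0 < t - s := sub_pos.mpr hs.2
    rw [show kk a (t - s) = (t - s) ^ (a - 1) / Real.Gamma a from if_pos hpos]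
    rw [Complex.real_smul, Complex.real_smul, Complex.ofReal_div]
    ring

lemma real_beta {a b : ℝ} (ha : 0 < a) (hb : 0 < b) {x : ℝ} (hx : 0 < x) :
    ∫ y in (0:ℝ)..x, y ^ (a - 1) * (x - y) ^ (b - 1)
      = x ^ (a + b - 1) * (Real.Gamma a * Real.Gamma b / Real.Gamma (a + b)) := by
  have hG : (Real.Gamma (a + b) : ℂ) ≠ 0 :=
    Complex.ofReal_ne_zero.mpr (Real.Gamma_pos_of_pos (by linarith)).ne'
  have h1 := Complex.betaIntegral_scaled (a : ℂ) (b : ℂ) hx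
  have h2 := Complex.Gamma_mul_Gamma_eq_betaIntegral
    (s := (a:ℂ)) (t := (b:ℂ)) (by simpa using ha) (by simpa using hb)
  have hbeta : Complex.betaIntegral a b
      = (Real.Gamma a * Real.Gamma b / Real.Gamma (a + b) : ℝ) := by
    have h3 : ((a:ℂ) + b) = ((a + b : ℝ) : ℂ) := by push_cast; ring
    rw [h3, Complex.Gamma_ofReal, Complex.Gamma_ofReal, Complex.Gamma_ofReal] at h2
    push_cast
    field_simp at h2 ⊢
    rw [h2]
  have hcast : ((∫ y in (0:ℝ)..x, y ^ (a - 1) * (x - y) ^ (b - 1) : ℝ) : ℂ)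
      = ∫ y in (0:ℝ)..x, (y:ℂ) ^ ((a:ℂ) - 1) * ((x:ℂ) - y) ^ ((b:ℂ) - 1) := by
    rw [← intervalIntegral.integral_ofReal]
    refine intervalIntegral.integral_congr (fun y hy => ?_)
    rw [Set.uIcc_of_le hx.le] at hy
    push_cast
    rw [Complex.ofReal_cpow hy.1, Complex.ofReal_cpow (by linarith [hy.2] : (0:ℝ) ≤ x - y)]
    push_cast
    ring
  have hx' : ((x:ℂ) ^ ((a:ℂ) + b - 1)) = ((x ^ (a + b - 1) : ℝ) : ℂ) := by
    rw [Complex.ofReal_cpow hx.le]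
    push_cast
    ring
  rw [← Complex.ofReal_inj, hcast, h1, hbeta, hx']
  push_cast
  ring

lemma beta_pointwise (a b : ℝ) (x : ℝ) :
    (fun s => kk a s * kk b (x - s))
      = Set.indicator (Set.Ioo 0 x)
          (fun s => s ^ (a - 1) * (x - s) ^ (b - 1) / (Real.Gamma a * Real.Gamma b)) := by
  funext s
  by_cases h1 : s ∈ Set.Ioo 0 x
  · rw [Set.indicator_of_mem h1]
    rw [show kk a s = s ^ (a - 1) / Real.Gamma a from if_pos h1.1,
      show kk b (x - s) = (x - s) ^ (b - 1) / Real.Gamma b from if_pos (sub_pos.mpr h1.2)]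
    ring
  · rw [Set.indicator_of_notMem h1]
    rcases le_or_gt s 0 with hs | hs
    · rw [kk_of_nonpos hs, zero_mul]
    · have hxs : x ≤ s := by
        by_contra hc
        exact h1 ⟨hs, not_le.mp hc⟩
      rw [kk_of_nonpos (by linarith : x - s ≤ 0), mul_zero]

lemma beta_intervalIntegrable {a b : ℝ} (ha : 0 < a) (hb : 0 < b) {x : ℝ} (hx : 0 < x) :
    IntervalIntegrable (fun s => s ^ (a - 1) * (x - s) ^ (b - 1)) volume 0 x := by
  have half : (0:ℝ) < x / 2 := by linarith
  have p1 : IntervalIntegrable (fun s => s ^ (a - 1) * (x - s) ^ (b - 1)) volume 0 (x / 2) := by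
    refine (intervalIntegral.intervalIntegrable_rpow' (by linarith)).mul_continuousOn ?_
    refine ContinuousOn.rpow_const ((continuousOn_const).sub (continuousOn_id)) ?_
    intro s hs
    rw [Set.uIcc_of_le half.le] at hs
    exact Or.inl (ne_of_gt (by linarith [hs.2]))
  have p2 : IntervalIntegrable (fun s => s ^ (a - 1) * (x - s) ^ (b - 1)) volume (x / 2) x := by
    have base : IntervalIntegrable (fun s : ℝ => s ^ (b - 1)) volume 0 (x / 2) :=
      intervalIntegral.intervalIntegrable_rpow' (by linarith)
    have comp := base.comp_sub_left x
    have hxx : x - x / 2 = x / 2 := by ring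
    rw [hxx, sub_zero] at comp
    refine comp.symm.continuousOn_mul ?_
    refine ContinuousOn.rpow_const (continuousOn_id) ?_
    intro s hs
    rw [Set.uIcc_of_le (by linarith : x / 2 ≤ x)] at hs
    exact Or.inl (ne_of_gt (show (0:ℝ) < s by linarith [hs.1]))
  exact p1.trans p2

lemma beta_integrable {a b : ℝ} (ha : 0 < a) (hb : 0 < b) (x : ℝ) :
    Integrable (fun s => kk a s * kk b (x - s)) volume := by
  rw [beta_pointwise]
  rcases le_or_gt x 0 with hx | hx
  · rw [Set.Ioo_eq_empty (not_lt.mpr hx)]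
    simp [integrable_zero]
  · rw [integrable_indicator_iff measurableSet_Ioo]
    exact (((beta_intervalIntegrable ha hb hx).1).mono_set Set.Ioo_subset_Ioc_self).div_const _

lemma beta_eval {a b : ℝ} (ha : 0 < a) (hb : 0 < b) (x : ℝ) :
    ∫ s, kk a s * kk b (x - s) = kk (a + b) x := by
  rw [beta_pointwise, MeasureTheory.integral_indicator measurableSet_Ioo]
  rcases le_or_gt x 0 with hx | hx
  · rw [Set.Ioo_eq_empty (not_lt.mpr hx), kk_of_nonpos hx]
    simp
  · rw [← MeasureTheory.integral_Ioc_eq_integral_Ioo,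
      ← intervalIntegral.integral_of_le hx.le]
    have hdiv : ∫ y in (0:ℝ)..x, y ^ (a - 1) * (x - y) ^ (b - 1) / (Real.Gamma a * Real.Gamma b)
        = (∫ y in (0:ℝ)..x, y ^ (a - 1) * (x - y) ^ (b - 1)) / (Real.Gamma a * Real.Gamma b) :=
      intervalIntegral.integral_div _ _
    rw [hdiv, real_beta ha hb hx,
      show kk (a + b) x = x ^ (a + b - 1) / Real.Gamma (a + b) from if_pos hx]
    have hGa := (Real.Gamma_pos_of_pos ha).ne'
    have hGb := (Real.Gamma_pos_of_pos hb).ne'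
    have hGab := (Real.Gamma_pos_of_pos (by linarith : (0:ℝ) < a + b)).ne'
    field_simp

lemma conv_kk_kk : (kk (2/3) ⋆[ContinuousLinearMap.mul ℝ ℝ, volume] kk (1/3)) = kk 1 := by
  funext x
  rw [convolution_def]
  have h := beta_eval (by norm_num : (0:ℝ) < 2/3) (by norm_num : (0:ℝ) < 1/3) x
  rw [show (2:ℝ)/3 + 1/3 = 1 from by norm_num] at h
  simpa only [ContinuousLinearMap.mul_apply'] using h

lemma ftc_conv (g : ℝ → ℂ) (hg : ContDiff ℝ (⊤ : ℕ∞) g) (hgc : HasCompactSupport g)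
    (hg0 : ∀ s ≤ (0:ℝ), g s = 0) (hD0 : ∀ s ≤ (0:ℝ), deriv g s = 0) (t : ℝ) :
    (kk 1 ⋆[ContinuousLinearMap.lsmul ℝ ℝ, volume] deriv g) t = g t := by
  rw [convolution_def]
  have key : (fun s => (ContinuousLinearMap.lsmul ℝ ℝ) (kk 1 s) (deriv g (t - s)))
      = fun s => ((Set.Iio t).indicator (deriv g)) (t - s) := by
    funext s
    simp only [ContinuousLinearMap.lsmul_apply]
    by_cases hs : 0 < s
    · rw [kk_one_of_pos hs, one_smul,
        Set.indicator_of_mem (show t - s ∈ Set.Iio t from Set.mem_Iio.mpr (by linarith))]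
    · have hs' : s ≤ 0 := not_lt.mp hs
      rw [kk_of_nonpos hs', zero_smul,
        Set.indicator_of_notMem
          (fun hmem => absurd (Set.mem_Iio.mp hmem) (by push_neg; linarith))]
  rw [key, integral_sub_left_eq_self ((Set.Iio t).indicator (deriv g)) volume t]
  have key2 : (Set.Iio t).indicator (deriv g) = (Set.Ioo 0 t).indicator (deriv g) := by
    funext x
    rcases le_or_gt x 0 with hx | hx
    · have h1 : (Set.Iio t).indicator (deriv g) x = 0 := by
        by_cases hxt : x ∈ Set.Iio t
        · rw [Set.indicator_of_mem hxt, hD0 x hx]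
        · rw [Set.indicator_of_notMem hxt]
      have h2 : (Set.Ioo 0 t).indicator (deriv g) x = 0 :=
        Set.indicator_of_notMem (fun h => absurd h.1 (not_lt.mpr hx)) _
      rw [h1, h2]
    · by_cases hxt : x < t
      · rw [Set.indicator_of_mem (Set.mem_Iio.mpr hxt),
          Set.indicator_of_mem (Set.mem_Ioo.mpr ⟨hx, hxt⟩)]
      · rw [Set.indicator_of_notMem (fun h => hxt (Set.mem_Iio.mp h)),
          Set.indicator_of_notMem (fun h => hxt (Set.mem_Ioo.mp h).2)]
  rw [key2, MeasureTheory.integral_indicator measurableSet_Ioo]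
  rcases le_or_gt t 0 with ht | ht
  · rw [Set.Ioo_eq_empty (not_lt.mpr ht), hg0 t ht]
    simp
  · rw [← MeasureTheory.integral_Ioc_eq_integral_Ioo, ← intervalIntegral.integral_of_le ht.le]
    rw [intervalIntegral.integral_deriv_eq_sub
      (fun x _ => (hg.differentiable (by simp)).differentiableAt)
      ((hg.continuous_deriv (by simp)).intervalIntegrable _ _)]
    rw [hg0 0 le_rfl, sub_zero]

lemma assoc_step (D : ℝ → ℂ) (hD : Continuous D) (hDc : HasCompactSupport D) (t : ℝ) :
    ((kk (2/3) ⋆[ContinuousLinearMap.mul ℝ ℝ, volume] kk (1/3))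
        ⋆[ContinuousLinearMap.lsmul ℝ ℝ, volume] D) t
      = (kk (2/3) ⋆[ContinuousLinearMap.lsmul ℝ ℝ, volume]
          (kk (1/3) ⋆[ContinuousLinearMap.lsmul ℝ ℝ, volume] D)) t := by
  have h23 : (0:ℝ) < 2/3 := by norm_num
  have h13 : (0:ℝ) < 1/3 := by norm_num
  refine convolution_assoc' (ContinuousLinearMap.mul ℝ ℝ) (ContinuousLinearMap.lsmul ℝ ℝ)
    (ContinuousLinearMap.lsmul ℝ ℝ) (ContinuousLinearMap.lsmul ℝ ℝ)
    (fun x y z => ?_) ?_ ?_ ?_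
  · simp [mul_smul]
  · exact Eventually.of_forall fun y => beta_integrable h23 h13 y
  · exact Eventually.of_forall fun x =>
      (hDc.convolutionExists_right (ContinuousLinearMap.lsmul ℝ ℝ)
        (locallyIntegrable_kk h13) hD) x
  · -- Integrable (uncurry fun x y => kk23 y • (kk13 (x-y) • D (t - x)))
    have hmeas : AEStronglyMeasurable
        (Function.uncurry fun x y => (kk (2/3) y) • ((kk (1/3) (x - y)) • D (t - x)))
        (volume.prod volume) := by
      apply Measurable.aestronglyMeasurable
      exact ((measurable_kk _).comp measurable_snd).smul
        ((((measurable_kk _).comp (measurable_fst.sub measurable_snd))).smul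
          (hD.measurable.comp (measurable_const.sub measurable_fst)))
    have : Function.uncurry (fun x y =>
          (ContinuousLinearMap.lsmul ℝ ℝ) (kk (2/3) y)
            ((ContinuousLinearMap.lsmul ℝ ℝ) (kk (1/3) (x - y)) (D (t - x))))
        = Function.uncurry fun x y => (kk (2/3) y) • ((kk (1/3) (x - y)) • D (t - x)) := rfl
    rw [this, integrable_prod_iff hmeas]
    constructor
    · refine Eventually.of_forall fun x => ?_
      simp only [Function.uncurry_apply_pair, smul_smul]
      exact (beta_integrable h23 h13 x).smul_const _
    · have hnorm : (fun x => ∫ y, ‖(kk (2/3) y) • ((kk (1/3) (x - y)) • D (t - x))‖)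
          = fun x => kk 1 x * ‖D (t - x)‖ := by
        funext x
        have : (fun y => ‖(kk (2/3) y) • ((kk (1/3) (x - y)) • D (t - x))‖)
            = fun y => kk (2/3) y * kk (1/3) (x - y) * ‖D (t - x)‖ := by
          funext y
          rw [norm_smul, norm_smul, Real.norm_of_nonneg (kk_nonneg h23 _),
            Real.norm_of_nonneg (kk_nonneg h13 _), mul_assoc]
        rw [this, MeasureTheory.integral_mul_const]
        have hb := beta_eval h23 h13 x
        rw [show (2:ℝ)/3 + 1/3 = 1 from by norm_num] at hb
        rw [hb]
      simp only [Function.uncurry_apply_pair]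
      rw [hnorm]
      have hint : Integrable (fun x => ‖D (t - x)‖) volume :=
        ((hD.integrable_of_hasCompactSupport hDc).comp_sub_left t).norm
      refine hint.mono' ?_ ?_
      · exact ((measurable_kk 1).mul
          ((hD.measurable.comp (measurable_const.sub measurable_id)).norm)).aestronglyMeasurable
      · refine Eventually.of_forall fun x => ?_
        rw [Real.norm_eq_abs, abs_mul, abs_of_nonneg (kk_nonneg one_pos x), abs_norm]
        exact mul_le_of_le_one_left (norm_nonneg _) (kk_one_le_one x)

/-- The Duhamel boundary forcing operator
`u(x,t) = 3 ∫₀^t A(x/(t-t')^{1/3}) (I_{-2/3}g)(t') / (t-t')^{1/3} dt'`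
built from a function `A` with the Airy value `A(0) = 1/(3Γ(2/3))` satisfies
`u(0,t) = g(t)` for all `t`, for every `g` smooth and compactly supported in `(0,∞)`. -/
theorem boundary_forcing_trace (A : ℝ → ℂ)
    (hA0 : A 0 = 1 / (3 * (Real.Gamma (2 / 3) : ℂ)))
    (g : ℝ → ℂ) (hg : ContDiff ℝ (⊤ : ℕ∞) g) (hgc : HasCompactSupport g)
    (hgsupp : tsupport g ⊆ Set.Ioi (0 : ℝ)) :
    ∀ t : ℝ,
      (3 : ℂ) * ∫ t' in (0 : ℝ)..t,
          A (0 / (t - t') ^ ((1 : ℝ) / 3)) *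
            RLnegTwoThirds g t' / (((t - t') ^ ((1 : ℝ) / 3) : ℝ) : ℂ) =
        g t := by
  intro t
  have h13 : (0:ℝ) < 1/3 := by norm_num
  have h23 : (0:ℝ) < 2/3 := by norm_num
  have hG23 : (Real.Gamma (2/3) : ℂ) ≠ 0 :=
    Complex.ofReal_ne_zero.mpr (Real.Gamma_pos_of_pos h23).ne'
  have hg0 : ∀ s ≤ (0:ℝ), g s = 0 := fun s hs =>
    image_eq_zero_of_notMem_tsupport (fun hmem => absurd (hgsupp hmem) (by simpa using hs.not_gt ∘ id))
  have hD0 : ∀ s ≤ (0:ℝ), deriv g s = 0 := by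
    intro s hs
    by_contra hne
    have h1 : s ∈ tsupport g := support_deriv_subset (by simpa using hne)
    exact absurd (hgsupp h1) (by simpa using hs)
  -- `RLnegTwoThirds g = kk (1/3) ⋆ deriv g`
  have hRLfun : RL (1/3) g = (kk (1/3) ⋆[ContinuousLinearMap.lsmul ℝ ℝ, volume] g) :=
    funext fun s => ((conv_kk_eq (1/3) g hg0 s).symm)
  have hderiv : ∀ s, RLnegTwoThirds g s
      = (kk (1/3) ⋆[ContinuousLinearMap.lsmul ℝ ℝ, volume] deriv g) s := by
    intro s
    rw [RLnegTwoThirds, hRLfun]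
    exact (HasCompactSupport.hasDerivAt_convolution_right
      (ContinuousLinearMap.lsmul ℝ ℝ) (locallyIntegrable_kk h13) hgc (hg.of_le (by simp)) s).deriv
  set h : ℝ → ℂ := kk (1/3) ⋆[ContinuousLinearMap.lsmul ℝ ℝ, volume] (deriv g) with hh
  have h0 : ∀ s ≤ (0:ℝ), h s = 0 := by
    intro s hs
    rw [hh, convolution_def]
    have hz : ∀ r : ℝ, (ContinuousLinearMap.lsmul ℝ ℝ) (kk (1/3) r) (deriv g (s - r)) = 0 := by
      intro r
      rcases le_or_gt r 0 with hr | hr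
      · simp [kk_of_nonpos hr]
      · simp [hD0 (s - r) (by linarith)]
    simp only [hz]
    exact integral_zero _ _
  have hae : ∀ᵐ x : ℝ ∂(volume : Measure ℝ), x ≠ t := by
    refine ae_iff.mpr ?_
    have : {x : ℝ | ¬ x ≠ t} = {t} := by ext x; simp
    rw [this]
    exact measure_singleton t
  -- rewrite the integrand
  have hLHS : (∫ t' in (0:ℝ)..t,
        A (0 / (t - t') ^ ((1:ℝ)/3)) * RLnegTwoThirds g t' / (((t - t') ^ ((1:ℝ)/3) : ℝ) : ℂ))
      = ∫ t' in (0:ℝ)..t,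
        (3:ℂ)⁻¹ * ((Real.Gamma (2/3) : ℂ)⁻¹ * ((((t - t') ^ ((2:ℝ)/3 - 1) : ℝ)) • h t')) := by
    apply intervalIntegral.integral_congr_ae
    filter_upwards [hae] with t' hne ht'
    rw [zero_div, hA0, hderiv t']
    rcases lt_or_ge t' t with hlt | hge
    · have hp : (0:ℝ) < t - t' := by linarith
      have hc : (0:ℝ) < (t - t') ^ ((1:ℝ)/3) := Real.rpow_pos_of_pos hp _
      have hexp : ((t - t') ^ ((2:ℝ)/3 - 1) : ℝ) = ((t - t') ^ ((1:ℝ)/3))⁻¹ := by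
        rw [show (2:ℝ)/3 - 1 = -(1/3) from by norm_num, Real.rpow_neg hp.le]
      rw [hexp, Complex.real_smul, Complex.ofReal_inv]
      have hcne : (((t - t') ^ ((1:ℝ)/3) : ℝ) : ℂ) ≠ 0 := Complex.ofReal_ne_zero.mpr hc.ne'
      rw [div_eq_mul_inv, div_eq_mul_inv]
      ring
    · have ht0 : t' ≤ 0 := by
        rcases Set.mem_uIoc.mp ht' with h1 | h1
        · exact absurd (le_antisymm h1.2 hge) hne
        · exact h1.2
      rw [h0 t' ht0]
      simp
  rw [hLHS, intervalIntegral.integral_const_mul, ← mul_assoc]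
  rw [show (3:ℂ) * (3:ℂ)⁻¹ = 1 from by norm_num, one_mul]
  have hfin : ∫ t' in (0:ℝ)..t,
      (Real.Gamma (2/3) : ℂ)⁻¹ * ((((t - t') ^ ((2:ℝ)/3 - 1) : ℝ)) • h t')
      = (kk (2/3) ⋆[ContinuousLinearMap.lsmul ℝ ℝ, volume] h) t := by
    rw [conv_kk_eq (2/3) h h0 t, intervalIntegral.integral_const_mul]
  rw [hfin, hh, ← assoc_step (deriv g) (hg.continuous_deriv (by simp)) hgc.deriv t, conv_kk_kk]
  exact ftc_conv g hg hgc hg0 hD0 t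
end
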